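/- arXiv:math/0608209 — 2 statements merged into one kernel-verified Lean document; each statement's English description precedes it below -/
import Mathlib

section
/- Define a function I : (list of natural numbers) → ℚ recursively by: I([2]) = I([1,1]) = 1/24 (for n = 2), and for n ≥ 3, if the list contains an entry equal to 1, remove it and multiply by (n-1) (dilaton equation); if it contains an entry equal to 0, remove it and replace the value by the sum over the remaining entries of the value with that entry decreased by 1 (string equation). Then for any list (d_1, ..., d_n) of nonnegative integers with d_1 + ... + d_n = n and d_1 < d_2, we have I(d_1, d_2, d_3, ..., d_n) ≤ I(d_1+1, d_2-1, d_3, ..., d_n). -/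
/-!
Induct on the length of the tail `L`. If `d₂ = d₁ + 1` the two lists are permutations of each
other. Otherwise `d₁ + d₂ ≥ 2`, so `∑ L ≤ |L|` and `L` (if nonempty) has an entry `0` or `1`;
apply the string or dilaton equation to that entry on both sides. The dilaton equation multiplies
both sides by the same factor. The string equation expands both sides into sums of terms in which
one entry is lowered: lowering an entry of `L` gives a smaller instance of the claim, lowering `d₂`
on the left gives the same term as lowering `d₁ + 1` on the right, and the remaining term
(lowering `d₁`) is dominated by lowering `d₂ - 1` on the right by two balancing steps, or by
nonnegativity of `I` on lists with `∑ dᵢ = n` if `d₁ = 0`. Nonnegativity follows from the same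
recursions.
-/

def stringSum {M : Type*} [AddCommMonoid M] (g : List ℕ → M) (l : List ℕ) : M :=
  ∑ j : Fin l.length, if 1 ≤ l.get j then g (l.set j (l.get j - 1)) else 0

theorem List.sum_set_get_sub_one_add_one {l : List ℕ} {j : Fin l.length} (hj : 1 ≤ l.get j) :
    (l.set j (l.get j - 1)).sum + 1 = l.sum := by
  induction l with
  | nil => exact j.elim0
  | cons a t ih =>
    cases j using Fin.cases with
    | zero =>
      simp only [get_eq_getElem, Fin.val_zero, getElem_cons_zero, set_cons_zero, sum_cons] at hj ⊢
      omega
    | succ i =>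
      have := ih (j := i) (by simpa using hj)
      simp only [get_eq_getElem, Fin.val_succ, getElem_cons_succ, set_cons_succ, sum_cons] at this ⊢
      omega

theorem List.eq_nil_or_zero_mem_or_one_mem_of_sum_le_length {L : List ℕ}
    (h : L.sum ≤ L.length) : L = [] ∨ 0 ∈ L ∨ 1 ∈ L := by
  by_contra! hL
  have := L.card_nsmul_le_sum 2 fun x hx => by
    have := hL.2.1; have := hL.2.2; rcases x with _ | _ | x <;> simp_all
  have : L.length = 0 := by rw [smul_eq_mul] at this; omega
  exact hL.1 (List.eq_nil_of_length_eq_zero this)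

theorem List.perm_cons_cons_erase {a x y : ℕ} {L : List ℕ} (h : a ∈ L) :
    (x :: y :: L).Perm (a :: x :: y :: L.erase a) :=
  (((List.perm_cons_erase h).cons y).cons x).trans (List.perm_middle (l₁ := [x, y]))

section stringSum

variable {M : Type*} [AddCommMonoid M]

theorem stringSum_cons (g : List ℕ → M) (a : ℕ) (l : List ℕ) :
    stringSum g (a :: l) =
      (if 1 ≤ a then g ((a - 1) :: l) else 0) + stringSum (fun l' => g (a :: l')) l := by
  simp [stringSum, Fin.sum_univ_succ]
  rfl

theorem stringSum_le_stringSum [PartialOrder M] [IsOrderedAddMonoid M] {g h : List ℕ → M}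
    {l : List ℕ}
    (hgh : ∀ l' : List ℕ, l'.length = l.length → l'.sum + 1 = l.sum → g l' ≤ h l') :
    stringSum g l ≤ stringSum h l := by
  refine Finset.sum_le_sum fun j _ => ?_
  split_ifs with hj
  · exact hgh _ (List.length_set ..) (List.sum_set_get_sub_one_add_one hj)
  · rfl

theorem stringSum_nonneg [PartialOrder M] [IsOrderedAddMonoid M] {g : List ℕ → M}
    {l : List ℕ}
    (hg : ∀ l' : List ℕ, l'.length = l.length → l'.sum + 1 = l.sum → 0 ≤ g l') :
    0 ≤ stringSum g l := by
  refine Finset.sum_nonneg fun j _ => ?_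
  split_ifs with hj
  · exact hg _ (List.length_set ..) (List.sum_set_get_sub_one_add_one hj)
  · rfl

end stringSum

structure GenusOneRecursion (I : List ℕ → ℚ) : Prop where
  perm : ∀ l l' : List ℕ, l.Perm l' → I l = I l'
  zero_two : I [0, 2] = 1 / 24
  one_one : I [1, 1] = 1 / 24
  dilaton : ∀ l : List ℕ, 2 ≤ l.length → I (1 :: l) = (l.length : ℚ) * I l
  string : ∀ l : List ℕ, 2 ≤ l.length → I (0 :: l) = stringSum I l

def BalancingMonotone (I : List ℕ → ℚ) (L : List ℕ) : Prop :=
  ∀ d1 d2 : ℕ, d1 + d2 + L.sum = L.length + 2 → d1 < d2 →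
    I (d1 :: d2 :: L) ≤ I ((d1 + 1) :: (d2 - 1) :: L)

namespace GenusOneRecursion

variable {I : List ℕ → ℚ}

theorem eq_of_length_eq_two (hI : GenusOneRecursion I) {l : List ℕ} (hlen : l.length = 2)
    (hsum : l.sum = 2) :
    I l = 1 / 24 := by
  obtain ⟨a, b, rfl⟩ := List.length_eq_two.mp hlen
  obtain rfl | rfl | rfl : a = 0 ∨ a = 1 ∨ a = 2 := by simp only [List.sum_cons, List.sum_nil] at hsum; omega
  · obtain rfl : b = 2 := by simpa using hsum
    exact hI.zero_two
  · obtain rfl : b = 1 := by simp only [List.sum_cons, List.sum_nil] at hsum; omega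
    exact hI.one_one
  · obtain rfl : b = 0 := by simp only [List.sum_cons, List.sum_nil] at hsum; omega
    exact (hI.perm _ _ (.swap 0 2 [])).trans hI.zero_two

theorem eq_stringSum_erase_zero (hI : GenusOneRecursion I) {l : List ℕ} (h0 : 0 ∈ l)
    (hlen : 3 ≤ l.length) : I l = stringSum I (l.erase 0) := by
  rw [hI.perm _ _ (List.perm_cons_erase h0), hI.string]
  rw [List.length_erase_of_mem h0]; omega

theorem eq_mul_erase_one (hI : GenusOneRecursion I) {l : List ℕ} (h1 : 1 ∈ l)
    (hlen : 3 ≤ l.length) : I l = ((l.erase 1).length : ℚ) * I (l.erase 1) := by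
  rw [hI.perm _ _ (List.perm_cons_erase h1), hI.dilaton]
  rw [List.length_erase_of_mem h1]; omega

theorem eq_stringSum_cons_cons_erase_zero (hI : GenusOneRecursion I) {L : List ℕ} (x y : ℕ)
    (h0 : 0 ∈ L) : I (x :: y :: L) = stringSum I (x :: y :: L.erase 0) := by
  rw [hI.perm _ _ (List.perm_cons_cons_erase h0), hI.string _ (by simp)]

theorem eq_mul_cons_cons_erase_one (hI : GenusOneRecursion I) {L : List ℕ} (x y : ℕ)
    (h1 : 1 ∈ L) :
    I (x :: y :: L) = ((x :: y :: L.erase 1).length : ℚ) * I (x :: y :: L.erase 1) := by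
  rw [hI.perm _ _ (List.perm_cons_cons_erase h1), hI.dilaton _ (by simp)]

theorem nonneg (hI : GenusOneRecursion I) {l : List ℕ} (hlen : 2 ≤ l.length)
    (hsum : l.sum = l.length) : 0 ≤ I l := by
  obtain ⟨n, hn⟩ : ∃ n, l.length = n := ⟨_, rfl⟩
  induction n, (hn ▸ hlen : 2 ≤ n) using Nat.le_induction generalizing l with
  | base => rw [hI.eq_of_length_eq_two hn (hsum.trans hn)]; norm_num
  | succ n hn2 ih =>
    rcases l.eq_nil_or_zero_mem_or_one_mem_of_sum_le_length hsum.le with rfl | h0 | h1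
    · simp at hn
    · have hlen' := List.length_erase_of_mem h0
      have hsum' := List.sum_erase h0
      rw [hI.eq_stringSum_erase_zero h0 (by omega)]
      exact stringSum_nonneg fun l' h₁ h₂ => ih (by omega) (by omega) (by omega)
    · have hlen' := List.length_erase_of_mem h1
      have hsum' := List.sum_erase h1
      rw [hI.eq_mul_erase_one h1 (by omega)]
      exact mul_nonneg (by positivity) (ih (by omega) (by omega) (by omega))

theorem le_balance_of_zero_mem (hI : GenusOneRecursion I) {d1 d2 : ℕ} {L : List ℕ}
    (ih : ∀ L' : List ℕ, L'.length < L.length → BalancingMonotone I L')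
    (h0 : 0 ∈ L) (hsum : d1 + d2 + L.sum = L.length + 2) (hd : d1 + 2 ≤ d2) :
    I (d1 :: d2 :: L) ≤ I ((d1 + 1) :: (d2 - 1) :: L) := by
  have hlen := List.length_erase_of_mem h0
  have hsum' := List.sum_erase h0
  have hpos := List.length_pos_of_mem h0
  obtain ⟨e, rfl⟩ : ∃ e, d2 = e + 1 + 1 := ⟨d2 - 2, by omega⟩
  simp only [hI.eq_stringSum_cons_cons_erase_zero _ _ h0, stringSum_cons]
  simp only [Nat.add_sub_cancel, le_add_iff_nonneg_left, zero_le, if_true]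
  have hfirst : (if 1 ≤ d1 then I ((d1 - 1) :: (e + 1 + 1) :: L.erase 0) else 0) ≤
      I ((d1 + 1) :: e :: L.erase 0) := by
    rcases d1 with _ | c
    · simpa using hI.nonneg (l := 1 :: e :: L.erase 0) (by simp) (by simp; omega)
    · calc I (c :: (e + 1 + 1) :: L.erase 0) ≤ I ((c + 1) :: (e + 1) :: L.erase 0) :=
            ih _ (by omega) _ _ (by omega) (by omega)
        _ ≤ I ((c + 1 + 1) :: e :: L.erase 0) := ih _ (by omega) _ _ (by omega) (by omega)
  have hrest : stringSum (fun l => I (d1 :: (e + 1 + 1) :: l)) (L.erase 0) ≤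
      stringSum (fun l => I ((d1 + 1) :: (e + 1) :: l)) (L.erase 0) :=
    stringSum_le_stringSum fun l' h₁ h₂ => ih l' (by omega) _ _ (by omega) (by omega)
  linarith

theorem le_balance_of_one_mem (hI : GenusOneRecursion I) {d1 d2 : ℕ} {L : List ℕ}
    (ih : ∀ L' : List ℕ, L'.length < L.length → BalancingMonotone I L')
    (h1 : 1 ∈ L) (hsum : d1 + d2 + L.sum = L.length + 2) (hlt : d1 < d2) :
    I (d1 :: d2 :: L) ≤ I ((d1 + 1) :: (d2 - 1) :: L) := by
  have hlen := List.length_erase_of_mem h1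
  have hsum' := List.sum_erase h1
  have hpos := List.length_pos_of_mem h1
  rw [hI.eq_mul_cons_cons_erase_one _ _ h1, hI.eq_mul_cons_cons_erase_one _ _ h1]
  exact mul_le_mul_of_nonneg_left (ih _ (by omega) _ _ (by omega) hlt) (by positivity)

theorem balancingMonotone (hI : GenusOneRecursion I) (L : List ℕ) : BalancingMonotone I L := by
  induction hL : L.length using Nat.strong_induction_on generalizing L with
  | _ n ih =>
    subst hL
    intro d1 d2 hsum hlt
    obtain rfl | hd : d2 = d1 + 1 ∨ d1 + 2 ≤ d2 := by omega
    · exact (hI.perm _ _ (.swap _ _ L)).le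
    rcases L.eq_nil_or_zero_mem_or_one_mem_of_sum_le_length (by omega) with rfl | h0 | h1
    · obtain ⟨rfl, rfl⟩ : d1 = 0 ∧ d2 = 2 := by simp only [List.sum_nil, List.length_nil] at hsum; omega
      exact (hI.zero_two.trans hI.one_one.symm).le
    · exact hI.le_balance_of_zero_mem (fun L' h => ih _ h L' rfl) h0 hsum hd
    · exact hI.le_balance_of_one_mem (fun L' h => ih _ h L' rfl) h1 hsum hlt

end GenusOneRecursion

theorem stmt_1 (I : List ℕ → ℚ)
    (hperm : ∀ l l' : List ℕ, l.Perm l' → I l = I l')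
    (hbase1 : I [0, 2] = 1 / 24)
    (hbase2 : I [1, 1] = 1 / 24)
    (hdilaton : ∀ l : List ℕ, 2 ≤ l.length → I (1 :: l) = (l.length : ℚ) * I l)
    (hstring : ∀ l : List ℕ, 2 ≤ l.length →
      I (0 :: l) = ∑ j : Fin l.length,
        if 1 ≤ l.get j then I (l.set j (l.get j - 1)) else 0) :
    ∀ (d1 d2 : ℕ) (L : List ℕ),
      d1 + d2 + L.sum = L.length + 2 → d1 < d2 →
      I (d1 :: d2 :: L) ≤ I ((d1 + 1) :: (d2 - 1) :: L) :=
  fun d1 d2 L =>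
    GenusOneRecursion.balancingMonotone ⟨hperm, hbase1, hbase2, hdilaton, hstring⟩ L d1 d2
end

section
/- For any prime p ≥ 5 and g with (2g+1)/3 < p ≤ g+1, the rational number (a+b)!/(4^{a+b}·24^c·(2a+2b+1)!!·(b-a)!·(2a+1)!·c!) with a = b = (p-1)/2 and c = g - (p-1) (the term with a = b = (p-1)/2 of the sum Σ_{a+b+c=g, b≥a} (a+b)!/(4^{a+b}·24^c·(2a+2b+1)!!·(b-a)!·(2a+1)!·c!)) has p-adic valuation at most -2, i.e. its denominator is divisible by p². -/
open Nat in
theorem stmt_13 (p g : ℕ) (hp : p.Prime) (hp5 : 5 ≤ p)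
    (h1 : 2 * g + 1 < 3 * p) (h2 : p ≤ g + 1) :
    padicValRat p
      (((((p - 1) / 2 + (p - 1) / 2 : ℕ).factorial : ℚ)) /
        (4 ^ ((p - 1) / 2 + (p - 1) / 2 : ℕ) * 24 ^ (g - (p - 1)) *
          (Nat.doubleFactorial (2 * ((p - 1) / 2) + 2 * ((p - 1) / 2) + 1) : ℚ) *
          (((p - 1) / 2 - (p - 1) / 2 : ℕ).factorial : ℚ) *
          ((2 * ((p - 1) / 2) + 1 : ℕ).factorial : ℚ) *
          ((g - (p - 1)).factorial : ℚ))) ≤ -2 := by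
  haveI : Fact p.Prime := ⟨hp⟩
  obtain ⟨k, hk⟩ := hp.odd_of_ne_two (by omega)
  set c := g - (p - 1) with hc
  have e1 : (p - 1) / 2 + (p - 1) / 2 = p - 1 := by omega
  have e2 : 2 * ((p - 1) / 2) + 2 * ((p - 1) / 2) + 1 = 2 * p - 1 := by omega
  have e3 : (p - 1) / 2 - (p - 1) / 2 = 0 := by omega
  have e4 : 2 * ((p - 1) / 2) + 1 = p := by omega
  rw [e1, e2, e3, e4]
  -- the denominator as a natural number
  set D : ℕ := 4 ^ (p - 1) * 24 ^ c * (2 * p - 1)‼ * p ! * c ! with hD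
  have hDcast : (4 : ℚ) ^ (p - 1) * 24 ^ c * ((2 * p - 1)‼ : ℚ) *
      (((0 : ℕ)! : ℕ) : ℚ) * ((p ! : ℕ) : ℚ) * ((c ! : ℕ) : ℚ) = (D : ℚ) := by
    simp only [hD, Nat.factorial_zero]
    push_cast
    ring
  have hDne : D ≠ 0 := by
    simp [hD, Nat.factorial_ne_zero, pow_ne_zero, (Nat.doubleFactorial_pos _).ne']
  have hNne : (((p - 1)! : ℕ) : ℚ) ≠ 0 := by
    exact_mod_cast (Nat.factorial_ne_zero _)
  rw [hDcast, padicValRat.div hNne (by exact_mod_cast hDne),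
    padicValRat.of_nat, padicValRat.of_nat]
  -- individual valuations
  have vfpm1 : padicValNat p ((p - 1)!) = 0 :=
    padicValNat.eq_zero_of_not_dvd (fun h => absurd ((hp.dvd_factorial).mp h) (by omega))
  have vfp : padicValNat p (p !) = 1 := by
    have := padicValNat_factorial_mul (p := p) 1
    simpa using this
  have vf2p : padicValNat p ((2 * p - 1)!) = 1 := by
    have h' : p - 1 < p := by omega
    have := padicValNat_factorial_mul_add (p := p) (n := p - 1) 1 h'
    have he : p * 1 + (p - 1) = 2 * p - 1 := by omega
    rw [he] at this
    rw [this, Nat.mul_one, vfp]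
  have v4 : padicValNat p (4 ^ (p - 1)) = 0 := by
    apply padicValNat.eq_zero_of_not_dvd
    intro h
    have := Nat.le_of_dvd (by norm_num) (hp.dvd_of_dvd_pow h)
    omega
  have v24 : padicValNat p (24 ^ c) = 0 := by
    apply padicValNat.eq_zero_of_not_dvd
    intro h
    have h24 : p ∣ 24 := hp.dvd_of_dvd_pow h
    have h8 : (24 : ℕ) = 8 * 3 := by norm_num
    rw [h8] at h24
    rcases (hp.dvd_mul).mp h24 with h' | h'
    · have h2 : (8 : ℕ) = 2 ^ 3 := by norm_num
      have : p ∣ 2 := hp.dvd_of_dvd_pow (h2 ▸ h')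
      have := Nat.le_of_dvd (by norm_num) this; omega
    · have := Nat.le_of_dvd (by norm_num) h'; omega
  have vcf : padicValNat p (c !) = 0 :=
    padicValNat.eq_zero_of_not_dvd (fun h => absurd ((hp.dvd_factorial).mp h) (by omega))
  have vdf : padicValNat p ((2 * p - 1)‼) = 1 := by
    have key : (2 * p - 1)! = (2 * p - 1)‼ * (2 * p - 2)‼ := by
      have := Nat.factorial_eq_mul_doubleFactorial (2 * p - 2)
      have he : 2 * p - 2 + 1 = 2 * p - 1 := by omega
      rwa [he] at this
    have h2 : (2 * p - 2)‼ = 2 ^ (p - 1) * (p - 1)! := by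
      have he : 2 * p - 2 = 2 * (p - 1) := by omega
      rw [he, Nat.doubleFactorial_two_mul]
    have v2 : padicValNat p ((2 * p - 2)‼) = 0 := by
      rw [h2, padicValNat.mul (pow_ne_zero _ two_ne_zero) (Nat.factorial_ne_zero _), vfpm1]
      have : padicValNat p (2 ^ (p - 1)) = 0 := by
        apply padicValNat.eq_zero_of_not_dvd
        intro h
        have := Nat.le_of_dvd (by norm_num) (hp.dvd_of_dvd_pow h)
        omega
      omega
    have := vf2p
    rw [key, padicValNat.mul (Nat.doubleFactorial_pos _).ne' (Nat.doubleFactorial_pos _).ne',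
      v2] at this
    omega
  have vD : padicValNat p D = 2 := by
    rw [hD, padicValNat.mul (by positivity) (Nat.factorial_ne_zero _),
      padicValNat.mul (by positivity) (Nat.factorial_ne_zero _),
      padicValNat.mul (by positivity) (Nat.doubleFactorial_pos _).ne',
      padicValNat.mul (by positivity) (by positivity),
      v4, v24, vdf, vfp, vcf]
  rw [vfpm1, vD]
  norm_num
end
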